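/- TreeInner with PreDecomp on the training data recovers total gain: defining GFA_f(m,k) = −α^{−1}·Σ_{i=1}^N f_{m,k}(x_i)·G_i with PreDecomp attributions f_{m,k} built from p_m(t) = −α·(Σ_{x_i∈R_t} G_i)/(|R_t|+λ), one has GFA_f(m,k) = TotalGain_{m,k} for every feature k, and summing over trees, GFA_f(k) = Σ_{m=1}^M GFA_f(m,k) = TotalGain_k = Σ_m Σ_{inner t in tree m: v(t)=k} Δ_m(t). -/

import Mathlib

open MeasureTheory Set Finset Filter

/-- A finite full binary tree: every node carries a region `R ⊆ β` and a value `w : ℝ`;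
inner nodes additionally carry a split feature `v : ℕ`. -/
inductive BT (β : Type) where
  | leaf (R : Set β) (w : ℝ)
  | node (R : Set β) (w : ℝ) (v : ℕ) (l r : BT β)

namespace BT

variable {β ι : Type}

/-- The region associated with the root node of a (sub)tree. -/
def region : BT β → Set β
  | leaf R _ => R
  | node R _ _ _ _ => R

/-- The value assigned to the root node of a (sub)tree. -/
def val : BT β → ℝ
  | leaf _ w => w
  | node _ w _ _ _ => w

/-- Well-formedness: the children's regions partition the parent's region. -/
def WF : BT β → Prop
  | leaf _ _ => True
  | node R _ _ l r => l.region ∪ r.region = R ∧ Disjoint l.region r.region ∧ l.WF ∧ r.WF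

/-- Tree prediction: `f(X) = Σ_{leaves ℓ} p(ℓ) · 1[X ∈ R_ℓ]`. -/
noncomputable def pred : BT β → β → ℝ
  | leaf R w, X => R.indicator (fun _ => w) X
  | node _ _ _ l r, X => l.pred X + r.pred X

/-- Total attribution: sum over all inner nodes `t` of
`p(left t)·1[X∈R_left] + p(right t)·1[X∈R_right] − p(t)·1[X∈R_t]`. -/
noncomputable def attr : BT β → β → ℝ
  | leaf _ _, _ => 0
  | node R w _ l r, X =>
      (l.region.indicator (fun _ => l.val) X + r.region.indicator (fun _ => r.val) X
        - R.indicator (fun _ => w) X) + l.attr X + r.attr X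

/-- PreDecomp: per-feature attribution, summing only over inner nodes splitting on feature `k`. -/
noncomputable def attrF (k : ℕ) : BT β → β → ℝ
  | leaf _ _, _ => 0
  | node R w v l r, X =>
      (if v = k then
        l.region.indicator (fun _ => l.val) X + r.region.indicator (fun _ => r.val) X
          - R.indicator (fun _ => w) X
       else 0) + l.attrF k X + r.attrF k X

/-- All split features of inner nodes belong to `s`. -/
def FeatsIn (s : Finset ℕ) : BT β → Prop
  | leaf _ _ => True
  | node _ _ v l r => v ∈ s ∧ l.FeatsIn s ∧ r.FeatsIn s

/-- Every node's value equals `pv` of its region. -/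
def ValsEq (pv : Set β → ℝ) : BT β → Prop
  | leaf R w => w = pv R
  | node R w _ l r => w = pv R ∧ l.ValsEq pv ∧ r.ValsEq pv

/-- A predicate holds for every node's region. -/
def AllRegions (P : Set β → Prop) : BT β → Prop
  | leaf R _ => P R
  | node R _ _ l r => P R ∧ l.AllRegions P ∧ r.AllRegions P

/-- A predicate holds at every subtree (i.e. every node). -/
def AllSub (P : BT β → Prop) : BT β → Prop
  | leaf R w => P (leaf R w)
  | node R w v l r => P (node R w v l r) ∧ l.AllSub P ∧ r.AllSub P

end BT

/-- `Σ_{x_i ∈ R ∩ D} G_i`. -/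
noncomputable def gsum {β ι : Type} (D : Finset ι) (x : ι → β) (G : ι → ℝ) (R : Set β) : ℝ :=
  ∑ i ∈ D, R.indicator (fun _ => G i) (x i)

/-- `|R ∩ D|` as a real number. -/
noncomputable def cnt {β ι : Type} (D : Finset ι) (x : ι → β) (R : Set β) : ℝ :=
  ∑ i ∈ D, R.indicator (fun _ => (1 : ℝ)) (x i)

namespace BT

/-- Total gain of feature `k` in a tree: sum of split gains over inner nodes splitting on `k`. -/
noncomputable def totalGain {β ι : Type} (D : Finset ι) (x : ι → β) (G : ι → ℝ)
    (lam : ℝ) (k : ℕ) : BT β → ℝ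
  | leaf _ _ => 0
  | node R _ v l r =>
      (if v = k then
        (gsum D x G l.region) ^ 2 / (cnt D x l.region + lam)
        + (gsum D x G r.region) ^ 2 / (cnt D x r.region + lam)
        - (gsum D x G R) ^ 2 / (cnt D x R + lam)
       else 0)
      + totalGain D x G lam k l + totalGain D x G lam k r

end BT

variable {β ι : Type} (D : Finset ι) (x : ι → β) (G : ι → ℝ)

lemma sum_indicator_const_mul (R : Set β) (c : ℝ) :
    ∑ i ∈ D, R.indicator (fun _ => c) (x i) * G i = c * gsum D x G R := by
  rw [gsum, mul_sum]
  refine sum_congr rfl fun i _ => ?_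
  by_cases h : x i ∈ R <;> simp [h]

lemma neg_inv_mul_nodeValue_mul_gsum {α : ℝ} (hα : α ≠ 0) (lam : ℝ) (R : Set β) :
    -α⁻¹ * (-α * gsum D x G R / (cnt D x R + lam) * gsum D x G R)
      = gsum D x G R ^ 2 / (cnt D x R + lam) := by
  field_simp

namespace BT

lemma ValsEq.val_eq {pv : Set β → ℝ} {t : BT β} (h : t.ValsEq pv) : t.val = pv t.region := by
  cases t with
  | leaf R w => exact h
  | node R w v l r => exact h.1

lemma sum_attrF_node_mul (k : ℕ) (R : Set β) (w : ℝ) (v : ℕ) (l r : BT β) :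
    ∑ i ∈ D, (node R w v l r).attrF k (x i) * G i
      = (if v = k then l.val * gsum D x G l.region + r.val * gsum D x G r.region
            - w * gsum D x G R else 0)
        + ∑ i ∈ D, l.attrF k (x i) * G i + ∑ i ∈ D, r.attrF k (x i) * G i := by
  simp only [attrF, add_mul, sum_add_distrib]
  split_ifs
  · simp only [sub_mul, add_mul, sum_sub_distrib, sum_add_distrib, sum_indicator_const_mul]
  · simp

theorem neg_inv_mul_sum_attrF_mul_eq_totalGain {α : ℝ} (hα : α ≠ 0) (lam : ℝ) (k : ℕ)
    (t : BT β) (ht : t.ValsEq (fun R => -α * gsum D x G R / (cnt D x R + lam))) :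
    -α⁻¹ * ∑ i ∈ D, t.attrF k (x i) * G i = t.totalGain D x G lam k := by
  induction t with
  | leaf R w => simp [attrF, totalGain]
  | node R w v l r ihl ihr =>
    obtain ⟨hw, hl, hr⟩ := ht
    rw [sum_attrF_node_mul, totalGain, mul_add, mul_add, ihl hl, ihr hr, hl.val_eq, hr.val_eq,
      hw]
    split_ifs
    · simp only [mul_sub, mul_add, neg_inv_mul_nodeValue_mul_gsum D x G hα]
    · simp

end BT

theorem stmt_9_general {β ι : Type} (D : Finset ι) (x : ι → β) (M : ℕ)
    (T : Fin M → BT β) (G : Fin M → ι → ℝ)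
    (α lam : ℝ) (hα : 0 < α)
    (hvals : ∀ m, (T m).ValsEq (fun R => -α * gsum D x (G m) R / (cnt D x R + lam)))
    (k : ℕ) :
    (∀ m, -α⁻¹ * ∑ i ∈ D, (T m).attrF k (x i) * G m i
        = (T m).totalGain D x (G m) lam k) ∧
    (∑ m, -α⁻¹ * ∑ i ∈ D, (T m).attrF k (x i) * G m i
        = ∑ m, (T m).totalGain D x (G m) lam k) := by
  have perTree : ∀ m, -α⁻¹ * ∑ i ∈ D, (T m).attrF k (x i) * G m i
      = (T m).totalGain D x (G m) lam k := fun m =>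
    BT.neg_inv_mul_sum_attrF_mul_eq_totalGain D x (G m) hα.ne' lam k (T m) (hvals m)
  exact ⟨perTree, sum_congr rfl fun m _ => perTree m⟩

/-- TreeInner with PreDecomp on training data recovers total gain, tree by
tree, and summed over the `M` trees of the ensemble. -/
theorem stmt_9 {β ι : Type} (D : Finset ι) (x : ι → β) (M : ℕ)
    (T : Fin M → BT β) (G : Fin M → ι → ℝ)
    (α lam : ℝ) (hα : 0 < α) (hlam : 0 ≤ lam)
    (hWF : ∀ m, (T m).WF)
    (hpos : ∀ m, (T m).AllRegions (fun R => 0 < cnt D x R + lam))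
    (hvals : ∀ m, (T m).ValsEq (fun R => -α * gsum D x (G m) R / (cnt D x R + lam)))
    (k : ℕ) :
    (∀ m, -α⁻¹ * ∑ i ∈ D, (T m).attrF k (x i) * G m i
        = (T m).totalGain D x (G m) lam k) ∧
    (∑ m, -α⁻¹ * ∑ i ∈ D, (T m).attrF k (x i) * G m i
        = ∑ m, (T m).totalGain D x (G m) lam k) :=
  stmt_9_general D x M T G α lam hα hvals k
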